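/- arXiv:2010.12929 — 3 statements merged into one kernel-verified Lean document; each statement's English description precedes it below -/
import Mathlib

section
/- Let f be a multiplicative function with |f(p)| ≤ B for some constant B, and define the exponentially multiplicative function φ by φ(p^ν) = f(p)^ν/(2^ν ν!). Then there exists a multiplicative function ψ with ψ(p) = 0 for all primes p such that f = φ * φ * ψ (Dirichlet convolution), where ψ(p^ν) = ∑_{0≤j≤ν} (−1)^j f(p)^j f(p^{ν−j})/j! for ν ≥ 1. -/
/-!
The Euler factor at `p` of the multiplicative function `expMul a : p ^ k ↦ a p ^ k / k!` is the
power series `exp (a p • X)`, so `expMul a * expMul b = expMul (a + b)` and `expMul 0 = 1`.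
As `φ = expMul (f / 2)`, the choice `ψ = f * expMul (-f)` gives `φ * φ * ψ = f * expMul 0 = f`,
and `ψ p = f p - f 1 * f p = 0`.
-/

open Finset ArithmeticFunction

section

-- kept local: under `open scoped Nat`, the `φ` below would denote `Nat.totient`
open scoped Nat

theorem add_pow_div_factorial {R : Type*} [Field R] [CharZero R] (x y : R) (n : ℕ) :
    (x + y) ^ n / n ! = ∑ j ∈ range (n + 1), x ^ j / j ! * (y ^ (n - j) / (n - j)!) := by
  have h := congrArg (PowerSeries.coeff n) (PowerSeries.exp_mul_exp_eq_exp_add x y)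
  simpa [PowerSeries.coeff_mul, Nat.sum_antidiagonal_eq_sum_range_succ_mk, div_eq_mul_inv,
    mul_mul_mul_comm] using h.symm

namespace ArithmeticFunction

variable {R : Type*}

theorem mul_apply_prime_pow [Semiring R] (a b : ArithmeticFunction R) {p : ℕ} (hp : p.Prime)
    (k : ℕ) : (a * b) (p ^ k) = ∑ j ∈ range (k + 1), a (p ^ j) * b (p ^ (k - j)) := by
  rw [mul_apply, Nat.sum_divisorsAntidiagonal (a · * b ·), Nat.sum_divisors_prime_pow hp]
  refine sum_congr rfl fun j hj => ?_
  rw [← Nat.pow_div (by simpa [Nat.lt_succ_iff] using hj) hp.pos]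

section ExpMul

variable [Field R]

noncomputable def expMul (a : ℕ → R) : ArithmeticFunction R :=
  ⟨fun n => if n = 0 then 0 else n.factorization.prod fun p k => a p ^ k / k !, by simp⟩

theorem expMul_apply {a : ℕ → R} {n : ℕ} (hn : n ≠ 0) :
    expMul a n = n.factorization.prod fun p k => a p ^ k / k ! := by
  simp [expMul, hn]

theorem expMul_apply_prime_pow (a : ℕ → R) {p : ℕ} (hp : p.Prime) (k : ℕ) :
    expMul a (p ^ k) = a p ^ k / k ! := by
  rw [expMul_apply (pow_ne_zero k hp.ne_zero), hp.factorization_pow,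
    Finsupp.prod_single_index (by simp)]

theorem isMultiplicative_expMul (a : ℕ → R) : (expMul a).IsMultiplicative := by
  refine ⟨by simp [expMul_apply one_ne_zero], fun {m n} hmn => ?_⟩
  rcases eq_or_ne m 0 with rfl | hm
  · simp
  rcases eq_or_ne n 0 with rfl | hn
  · simp
  rw [expMul_apply (mul_ne_zero hm hn), expMul_apply hm, expMul_apply hn,
    Nat.factorization_mul_of_coprime hmn,
    Finsupp.prod_add_index_of_disjoint hmn.disjoint_primeFactors]

theorem IsMultiplicative.eq_expMul {f : ArithmeticFunction R} (hf : f.IsMultiplicative)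
    {a : ℕ → R} (h : ∀ p k, p.Prime → 1 ≤ k → f (p ^ k) = a p ^ k / k !) : f = expMul a := by
  refine (IsMultiplicative.eq_iff_eq_on_prime_powers f hf _ (isMultiplicative_expMul a)).2
    fun p k hp => ?_
  rw [expMul_apply_prime_pow a hp]
  rcases k.eq_zero_or_pos with rfl | hk
  · simp [hf.map_one]
  · exact h p k hp hk

theorem expMul_zero : expMul (0 : ℕ → R) = 1 := by
  refine (IsMultiplicative.eq_iff_eq_on_prime_powers _ (isMultiplicative_expMul 0) 1
    isMultiplicative_one).2 fun p k hp => ?_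
  rcases k.eq_zero_or_pos with rfl | hk
  · simp [(isMultiplicative_expMul 0).map_one]
  · rw [expMul_apply_prime_pow 0 hp, one_apply_ne (Nat.one_lt_pow hk.ne' hp.one_lt).ne']
    simp [hk.ne']

theorem expMul_mul_expMul [CharZero R] (a b : ℕ → R) : expMul a * expMul b = expMul (a + b) := by
  refine (IsMultiplicative.eq_iff_eq_on_prime_powers _
    ((isMultiplicative_expMul a).mul (isMultiplicative_expMul b)) _
    (isMultiplicative_expMul _)).2 fun p k hp => ?_
  simp only [mul_apply_prime_pow _ _ hp, expMul_apply_prime_pow _ hp, Pi.add_apply,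
    add_pow_div_factorial]

end ExpMul

end ArithmeticFunction

end

theorem factorization_f_eq_phi_phi_psi_general (f φ : ArithmeticFunction ℂ)
    (hfmul : f.IsMultiplicative)
    (hφmul : φ.IsMultiplicative)
    (hφval : ∀ (p ν : ℕ), p.Prime → 1 ≤ ν →
      φ (p ^ ν) = f p ^ ν / (2 ^ ν * Nat.factorial ν)) :
    ∃ ψ : ArithmeticFunction ℂ, ψ.IsMultiplicative ∧
      (∀ p : ℕ, p.Prime → ψ p = 0) ∧
      (∀ (p ν : ℕ), p.Prime → 1 ≤ ν →
        ψ (p ^ ν) = ∑ j ∈ Finset.range (ν + 1),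
          (-1) ^ j * f p ^ j * f (p ^ (ν - j)) / Nat.factorial j) ∧
      f = φ * φ * ψ := by
  have hφ : φ = expMul (f · / 2) :=
    hφmul.eq_expMul fun p ν hp hν => by rw [hφval p ν hp hν, div_pow, div_div]
  have hψ : ∀ {p : ℕ}, p.Prime → ∀ ν, (f * expMul (-f ·)) (p ^ ν) =
      ∑ j ∈ range (ν + 1), (-1) ^ j * f p ^ j * f (p ^ (ν - j)) / Nat.factorial j := by
    intro p hp ν
    rw [mul_comm, mul_apply_prime_pow _ _ hp]
    refine sum_congr rfl fun j _ => ?_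
    rw [expMul_apply_prime_pow _ hp, neg_pow]
    ring
  refine ⟨f * expMul (-f ·), hfmul.mul (isMultiplicative_expMul _), fun p hp => ?_,
    fun p ν hp _ => hψ hp ν, ?_⟩
  · simpa [sum_range_succ, hfmul.map_one] using hψ hp 1
  · have hsum : ((f · / 2) + (f · / 2) + (-f ·) : ℕ → ℂ) = 0 := by
      ext p
      simp only [Pi.add_apply, Pi.zero_apply]
      ring
    calc f = f * (expMul (f · / 2) * expMul (f · / 2) * expMul (-f ·)) := by
          rw [expMul_mul_expMul, expMul_mul_expMul, hsum, expMul_zero, mul_one]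
      _ = φ * φ * (f * expMul (-f ·)) := by rw [hφ]; ring

theorem factorization_f_eq_phi_phi_psi (B : ℝ) (f φ : ArithmeticFunction ℂ)
    (hfmul : f.IsMultiplicative)
    (hB : ∀ p : ℕ, p.Prime → ‖f p‖ ≤ B)
    (hφmul : φ.IsMultiplicative)
    (hφval : ∀ (p ν : ℕ), p.Prime → 1 ≤ ν →
      φ (p ^ ν) = f p ^ ν / (2 ^ ν * Nat.factorial ν)) :
    ∃ ψ : ArithmeticFunction ℂ, ψ.IsMultiplicative ∧
      (∀ p : ℕ, p.Prime → ψ p = 0) ∧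
      (∀ (p ν : ℕ), p.Prime → 1 ≤ ν →
        ψ (p ^ ν) = ∑ j ∈ Finset.range (ν + 1),
          (-1) ^ j * f p ^ j * f (p ^ (ν - j)) / Nat.factorial j) ∧
      f = φ * φ * ψ :=
  factorization_f_eq_phi_phi_psi_general f φ hfmul hφmul hφval
end

section
/- Let ε_p := |f(p)|²/p^{2σ} + ∑_{ν≥2} |f(p^ν)|/p^{νσ} for a multiplicative function f and σ ∈ (0,1), and define ψ multiplicatively by ψ(p^ν) = ∑_{0≤j≤ν} (−1)^j f(p)^j f(p^{ν−j})/j! for ν ≥ 1. Then for each prime p, ∑_{ν≥2} |ψ(p^ν)|/p^{νσ} ≤ ∑_{j+k≥2} |f(p)|^j |f(p^k)| / (j! p^{σ(k+j)}) ≪ ε_p, with implied constant depending only on a bound for |f(p)|/p^σ and ε_p. -/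
/-!
Put `α = |f(p)|/p^σ` and `b_k = |f(p^k)|/p^{kσ}`. The triangle inequality bounds
`|ψ(p^ν)|/p^{νσ}` by the antidiagonal sum `∑_{j+k=ν} α^j b_k / j!`, and summing over `ν ≥ 2`
gives the double series. With `D = max C 1 ≥ α`, each term with `j + k ≥ 2` is at most
`D^j/j! · w_k`, where `w_k = b_k` for `k ≥ 2` and `w_0 = w_1 = α²`: this uses `b_0 = 1` and
`b_1 = α`, so that `α^j b_k ≤ α^{j+k} ≤ D^j α²`. Hence the double series is at most
`exp D · (∑_{k≥2} b_k + 2α²) ≤ 2 exp D · ε_p`.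
-/

open Finset Nat

theorem HasSum.sum_antidiagonal {A M : Type*} [AddMonoid A] [HasAntidiagonal A]
    [AddCommMonoid M] [TopologicalSpace M] [ContinuousAdd M] [RegularSpace M]
    {F : A × A → M} {a : M} (hF : HasSum F a) :
    HasSum (fun n => ∑ kl ∈ antidiagonal n, F kl) a :=
  (HasAntidiagonal.sigmaAntidiagonalEquivProd.hasSum_iff.mpr hF).sigma fun n =>
    (antidiagonal n).hasSum F

theorem HasSum.ite_le_const {M : Type*} [AddCommMonoid M] [TopologicalSpace M] [ContinuousAdd M]
    {b : ℕ → M} {t : M} (n : ℕ) (c : M) (h : HasSum (fun k => if n ≤ k then b k else 0) t) :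
    HasSum (fun k => if n ≤ k then b k else c) (t + n • c) := by
  have hc : HasSum (fun k => if n ≤ k then 0 else c) (n • c) := by
    have := hasSum_sum_of_ne_finset_zero (L := .unconditional ℕ)
      (f := fun k => if n ≤ k then 0 else c) (s := range n)
      fun k hk => if_pos (not_lt.mp (mt mem_range.mpr hk))
    rwa [sum_congr rfl fun k hk => if_neg (not_le.mpr (mem_range.mp hk)), sum_const,
      card_range] at this
  convert h.add hc using 1
  ext k
  split_ifs <;> simp

theorem pow_mul_div_factorial_mul_pow_add (x y s : ℝ) (j k : ℕ) :
    x ^ j * y / (j ! * s ^ (j + k)) = (x / s) ^ j / j ! * (y / s ^ k) := by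
  ring

noncomputable def pairTail (α : ℝ) (b : ℕ → ℝ) (jk : ℕ × ℕ) : ℝ :=
  if 2 ≤ jk.1 + jk.2 then α ^ jk.1 / jk.1 ! * b jk.2 else 0

section PairTail

variable {α D : ℝ} {b : ℕ → ℝ}

theorem pairTail_nonneg (hα : 0 ≤ α) (hb : ∀ k, 0 ≤ b k) (jk : ℕ × ℕ) :
    0 ≤ pairTail α b jk := by
  unfold pairTail
  split_ifs
  · exact mul_nonneg (by positivity) (hb _)
  · exact le_rfl

theorem pow_le_pow_mul_sq (hα : 0 ≤ α) (hαD : α ≤ D) (hD : 1 ≤ D) {n j : ℕ}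
    (h2n : 2 ≤ n) (hnj : n ≤ j + 2) : α ^ n ≤ D ^ j * α ^ 2 := by
  obtain ⟨m, rfl⟩ := Nat.exists_eq_add_of_le' h2n
  calc α ^ (m + 2) = α ^ m * α ^ 2 := pow_add α m 2
    _ ≤ D ^ m * α ^ 2 := by gcongr
    _ ≤ D ^ j * α ^ 2 := by gcongr; omega

theorem pairTail_le (hα : 0 ≤ α) (hαD : α ≤ D) (hD : 1 ≤ D) (hb : ∀ k, 0 ≤ b k)
    (hb0 : b 0 ≤ 1) (hb1 : b 1 ≤ α) (jk : ℕ × ℕ) :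
    pairTail α b jk ≤ D ^ jk.1 / jk.1 ! * (if 2 ≤ jk.2 then b jk.2 else α ^ 2) := by
  obtain ⟨j, k⟩ := jk
  unfold pairTail
  split_ifs with hjk hk hk
  · have := hb k
    gcongr
  · have hbk : b k ≤ α ^ k := by interval_cases k <;> simpa
    calc α ^ j / j ! * b k ≤ α ^ j / j ! * α ^ k := by gcongr
      _ = α ^ (j + k) / j ! := by ring
      _ ≤ D ^ j * α ^ 2 / j ! := by gcongr; exact pow_le_pow_mul_sq hα hαD hD hjk (by omega)
      _ = D ^ j / j ! * α ^ 2 := by ring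
  · exact mul_nonneg (by positivity) (hb k)
  · positivity

theorem summable_pairTail_and_tsum_le (hα : 0 ≤ α) (hαD : α ≤ D) (hD : 1 ≤ D)
    (hb : ∀ k, 0 ≤ b k) (hb0 : b 0 ≤ 1) (hb1 : b 1 ≤ α)
    (hbs : Summable fun k => if 2 ≤ k then b k else 0) :
    Summable (pairTail α b) ∧
      ∑' jk, pairTail α b jk
        ≤ 2 * Real.exp D * (α ^ 2 + ∑' k, if 2 ≤ k then b k else 0) := by
  set t := ∑' k, if 2 ≤ k then b k else 0
  have hexp : HasSum (fun j => D ^ j / j !) (Real.exp D) := by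
    rw [Real.exp_eq_exp_ℝ]
    exact NormedSpace.expSeries_div_hasSum_exp D
  have hw := hbs.hasSum.ite_le_const 2 (α ^ 2)
  have hw0 : ∀ k, 0 ≤ if 2 ≤ k then b k else α ^ 2 := fun k => by
    split_ifs
    exacts [hb k, by positivity]
  -- without the explicit `g`, unifying `g jk.2` with the `ite` times out
  have hmaj := hexp.mul hw <|
    Summable.mul_of_nonneg (g := fun k => if 2 ≤ k then b k else α ^ 2)
      hexp.summable hw.summable (fun j => by positivity) hw0
  have hs : Summable (pairTail α b) :=
    .of_nonneg_of_le (pairTail_nonneg hα hb) (pairTail_le hα hαD hD hb hb0 hb1) hmaj.summable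
  refine ⟨hs, (hasSum_le (pairTail_le hα hαD hD hb hb0 hb1) hs.hasSum hmaj).trans ?_⟩
  have ht : 0 ≤ t := tsum_nonneg fun k => by split_ifs; exacts [hb k, le_rfl]
  have := Real.exp_pos D
  rw [two_nsmul]
  nlinarith

end PairTail

section Psi

variable {𝕜 : Type*} [RCLike 𝕜]

/-- `psiCoeff (f p) (fun k => f (p ^ k)) ν` is `ψ(p^ν)`. -/
def psiCoeff (z : 𝕜) (w : ℕ → 𝕜) (ν : ℕ) : 𝕜 :=
  ∑ j ∈ range (ν + 1), (-1) ^ j * z ^ j * w (ν - j) / (j ! : 𝕜)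

theorem norm_psiCoeff_le (z : 𝕜) (w : ℕ → 𝕜) (ν : ℕ) :
    ‖psiCoeff z w ν‖ ≤ ∑ jk ∈ antidiagonal ν, ‖z‖ ^ jk.1 * ‖w jk.2‖ / jk.1 ! := by
  rw [psiCoeff, Nat.sum_antidiagonal_eq_sum_range_succ_mk]
  refine (norm_sum_le _ _).trans_eq (sum_congr rfl fun j _ => ?_)
  simp

theorem norm_psiCoeff_div_le_sum_pairTail {s : ℝ} (hs : 0 < s) (z : 𝕜) (w : ℕ → 𝕜) (ν : ℕ) :
    (if 2 ≤ ν then ‖psiCoeff z w ν‖ / s ^ ν else 0)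
      ≤ ∑ jk ∈ antidiagonal ν, pairTail (‖z‖ / s) (fun k => ‖w k‖ / s ^ k) jk := by
  split_ifs with hν
  · calc ‖psiCoeff z w ν‖ / s ^ ν
        ≤ (∑ jk ∈ antidiagonal ν, ‖z‖ ^ jk.1 * ‖w jk.2‖ / jk.1 !) / s ^ ν := by
          gcongr
          exact norm_psiCoeff_le z w ν
      _ = _ := by
          rw [sum_div]
          refine sum_congr rfl fun jk hjk => ?_
          rw [HasAntidiagonal.mem_antidiagonal] at hjk
          rw [pairTail, if_pos (hjk ▸ hν), ← pow_mul_div_factorial_mul_pow_add, hjk, div_div]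
  · exact sum_nonneg fun jk _ => pairTail_nonneg (by positivity) (fun k => by positivity) jk

theorem tsum_norm_psiCoeff_div_le_tsum_pairTail {s : ℝ} (hs : 0 < s) {z : 𝕜} {w : ℕ → 𝕜}
    (h : Summable (pairTail (‖z‖ / s) (fun k => ‖w k‖ / s ^ k))) :
    ∑' ν, (if 2 ≤ ν then ‖psiCoeff z w ν‖ / s ^ ν else 0)
      ≤ ∑' jk, pairTail (‖z‖ / s) (fun k => ‖w k‖ / s ^ k) jk := by
  have hanti := h.hasSum.sum_antidiagonal
  have hψ : Summable fun ν => if 2 ≤ ν then ‖psiCoeff z w ν‖ / s ^ ν else 0 :=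
    .of_nonneg_of_le (fun ν => by split_ifs <;> positivity)
      (norm_psiCoeff_div_le_sum_pairTail hs z w) hanti.summable
  exact hasSum_le (norm_psiCoeff_div_le_sum_pairTail hs z w) hψ.hasSum hanti

theorem psi_tail_bounds {s D : ℝ} (hs : 0 < s) (hD : 1 ≤ D) {z : 𝕜} {w : ℕ → 𝕜}
    (hzD : ‖z‖ / s ≤ D) (hw0 : ‖w 0‖ ≤ 1) (hw1 : ‖w 1‖ ≤ ‖z‖)
    (hsum : Summable fun ν => if 2 ≤ ν then ‖w ν‖ / s ^ ν else 0) :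
    (∑' ν, (if 2 ≤ ν then ‖psiCoeff z w ν‖ / s ^ ν else 0)
      ≤ ∑' jk : ℕ × ℕ, if 2 ≤ jk.1 + jk.2 then
          ‖z‖ ^ jk.1 * ‖w jk.2‖ / (jk.1 ! * s ^ (jk.1 + jk.2)) else 0) ∧
    (∑' jk : ℕ × ℕ, if 2 ≤ jk.1 + jk.2 then
          ‖z‖ ^ jk.1 * ‖w jk.2‖ / (jk.1 ! * s ^ (jk.1 + jk.2)) else 0)
      ≤ 2 * Real.exp D * (‖z‖ ^ 2 / s ^ 2 + ∑' ν, if 2 ≤ ν then ‖w ν‖ / s ^ ν else 0) := by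
  have hpair : (fun jk : ℕ × ℕ => if 2 ≤ jk.1 + jk.2 then
      ‖z‖ ^ jk.1 * ‖w jk.2‖ / (jk.1 ! * s ^ (jk.1 + jk.2)) else 0)
      = pairTail (‖z‖ / s) (fun k => ‖w k‖ / s ^ k) := by
    ext jk
    rw [pairTail, pow_mul_div_factorial_mul_pow_add]
  obtain ⟨hsumm, hle⟩ := summable_pairTail_and_tsum_le (by positivity) hzD hD
    (fun k => by positivity) (by simpa using hw0)
    (by simpa using div_le_div_of_nonneg_right hw1 hs.le) hsum
  rw [hpair, ← div_pow]
  exact ⟨tsum_norm_psiCoeff_div_le_tsum_pairTail hs hsumm, hle⟩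

end Psi

theorem psi_prime_power_tail_bound :
    ∀ C : ℝ, 0 < C → ∃ C' : ℝ, 0 < C' ∧
      ∀ (f : ℕ → ℂ), f 1 = 1 → ∀ (σ : ℝ), 0 < σ → σ < 1 → ∀ p : ℕ, p.Prime →
      Summable (fun ν : ℕ => if 2 ≤ ν then ‖f (p ^ ν)‖ / (p : ℝ) ^ (σ * ν) else 0) →
      ‖f p‖ / (p : ℝ) ^ σ ≤ C →
      ‖f p‖ ^ 2 / (p : ℝ) ^ (2 * σ)
        + (∑' ν : ℕ, if 2 ≤ ν then ‖f (p ^ ν)‖ / (p : ℝ) ^ (σ * ν) else 0) ≤ C →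
      ((∑' ν : ℕ, if 2 ≤ ν then
          ‖∑ j ∈ Finset.range (ν + 1),
            (-1) ^ j * f p ^ j * f (p ^ (ν - j)) / (Nat.factorial j : ℂ)‖ / (p : ℝ) ^ (σ * ν)
          else 0)
        ≤ ∑' jk : ℕ × ℕ, (if 2 ≤ jk.1 + jk.2 then
            ‖f p‖ ^ jk.1 * ‖f (p ^ jk.2)‖
              / (Nat.factorial jk.1 * (p : ℝ) ^ (σ * (jk.1 + jk.2))) else 0)) ∧
      (∑' jk : ℕ × ℕ, (if 2 ≤ jk.1 + jk.2 then
            ‖f p‖ ^ jk.1 * ‖f (p ^ jk.2)‖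
              / (Nat.factorial jk.1 * (p : ℝ) ^ (σ * (jk.1 + jk.2))) else 0))
        ≤ C' * (‖f p‖ ^ 2 / (p : ℝ) ^ (2 * σ)
            + ∑' ν : ℕ, if 2 ≤ ν then ‖f (p ^ ν)‖ / (p : ℝ) ^ (σ * ν) else 0) := by
  intro C _
  refine ⟨2 * Real.exp (max C 1), by positivity, ?_⟩
  intro f hf1 σ _ _ p hp hsum hfC _
  have hp0 : (0 : ℝ) ≤ p := p.cast_nonneg
  have hpow : ∀ n : ℕ, (p : ℝ) ^ (σ * n) = ((p : ℝ) ^ σ) ^ n := Real.rpow_mul_natCast hp0 σ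
  have hsq : (p : ℝ) ^ (2 * σ) = ((p : ℝ) ^ σ) ^ 2 := by
    rw [mul_comm]
    exact_mod_cast hpow 2
  simp only [← Nat.cast_add, hpow, hsq] at hsum ⊢
  exact psi_tail_bounds (w := fun k => f (p ^ k))
    (Real.rpow_pos_of_pos (Nat.cast_pos.mpr hp.pos) σ) (le_max_right C 1)
    (hfC.trans (le_max_left C 1)) (by simp [hf1]) (by simp) hsum
end

section
/- Let f be a non-negative multiplicative function and x ≥ 2. Then the identity ∑_{n≤x} f(n) log x = ∑_{n≤x} f(n) log n + ∑_{n≤x} f(n) log(x/n) holds, and moreover ∑_{n≤x} f(n) log n = ∑_{m≤x} f(m) ∑_{p^ν ≤ x/m, p∤m} f(p^ν) log(p^ν), where the inner sum is over prime powers p^ν with p not dividing m. -/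
/-!
Part one is `log x = log n + log (x / n)` termwise. For part two, expand
`log n = ∑_{p ∣ n} log p^{v_p(n)}` and split `f n = f (p^{v_p(n)}) f (n / p^{v_p(n)})` by
multiplicativity; the pairs `(n, p)` with `p ∣ n` then correspond bijectively to the triples
`(m, p, ν)` with `p ∤ m` via `n = p^ν m`, `ν = v_p(n)`, `m = n / p^ν`.
-/

open Finset Real

namespace Nat

theorem factorization_pow_mul_of_not_dvd {p m : ℕ} (hp : p.Prime) (hm : ¬p ∣ m) (ν : ℕ) :
    (p ^ ν * m).factorization p = ν := by
  have hm0 : m ≠ 0 := by rintro rfl; exact hm (dvd_zero p)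
  rw [factorization_mul (pow_ne_zero _ hp.ne_zero) hm0, Finsupp.add_apply, hp.factorization_pow,
    Finsupp.single_eq_same, factorization_eq_zero_of_not_dvd hm, add_zero]

theorem sum_Icc_sum_primeFactors_eq_sum_pow_mul {M : Type*} [AddCommMonoid M] (N : ℕ)
    (g : ℕ → ℕ → ℕ → M) :
    ∑ n ∈ Icc 1 N, ∑ p ∈ n.primeFactors, g (ordCompl[p] n) p (n.factorization p)
      = ∑ m ∈ Icc 1 N, ∑ p ∈ Icc 1 N, ∑ ν ∈ Icc 1 N,
          if p.Prime ∧ ¬p ∣ m ∧ p ^ ν * m ≤ N then g m p ν else 0 := by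
  rw [sum_sigma']
  simp only [← sum_product']
  rw [← sum_filter]
  refine sum_nbij' (fun t => (ordCompl[t.2] t.1, t.2, t.1.factorization t.2))
    (fun t => ⟨t.2.1 ^ t.2.2 * t.1, t.2.1⟩) ?_ ?_ ?_ ?_ (fun _ _ => rfl)
  · rintro ⟨n, p⟩ h
    simp only [mem_sigma, mem_Icc, mem_primeFactors] at h
    obtain ⟨⟨hn1, hnN⟩, hp, hpn, hn0⟩ := h
    have hν : 0 < n.factorization p := hp.factorization_pos_of_dvd hn0 hpn
    have hp_le : p ≤ ordProj[p] n := le_self_pow hν.ne' p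
    have hordProj_le : ordProj[p] n ≤ n := ordProj_le p hn0
    have hm_pos : 0 < ordCompl[p] n := ordCompl_pos p hn0
    have hm_le : ordCompl[p] n ≤ n := ordCompl_le n p
    have hν_le : n.factorization p < n := factorization_lt p hn0
    simp only [mem_filter, mem_product, mem_Icc, ordProj_mul_ordCompl_eq_self]
    exact ⟨⟨⟨hm_pos, by omega⟩, ⟨hp.pos, by omega⟩, hν, by omega⟩,
      hp, not_dvd_ordCompl hp hn0, hnN⟩
  · rintro ⟨m, p, ν⟩ h
    simp only [mem_filter, mem_product, mem_Icc] at h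
    obtain ⟨⟨⟨hm1, -⟩, -, hν1, -⟩, hp, -, hN⟩ := h
    have hn0 : p ^ ν * m ≠ 0 := mul_ne_zero (pow_ne_zero ν hp.ne_zero) (by omega)
    simp only [mem_sigma, mem_Icc, mem_primeFactors]
    exact ⟨⟨one_le_iff_ne_zero.2 hn0, hN⟩, hp,
      dvd_mul_of_dvd_left (dvd_pow_self p (by omega)) m, hn0⟩
  · rintro ⟨n, p⟩ -
    simp only [ordProj_mul_ordCompl_eq_self]
  · rintro ⟨m, p, ν⟩ h
    obtain ⟨-, hp, hpm, -⟩ := mem_filter.1 h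
    dsimp only
    rw [factorization_pow_mul_of_not_dvd hp hpm, Nat.mul_div_cancel_left m (pow_pos hp.pos ν)]

theorem cast_le_of_mem_Icc_one_floor {R : Type*} [Semiring R] [LinearOrder R]
    [IsStrictOrderedRing R] [FloorSemiring R] {x : R} {n : ℕ} (hn : n ∈ Icc 1 ⌊x⌋₊) :
    (n : R) ≤ x :=
  (le_floor_iff' (one_le_iff_ne_zero.1 (mem_Icc.1 hn).1)).1 (mem_Icc.1 hn).2

end Nat

theorem Real.log_natCast_eq_sum_primeFactors {n : ℕ} (hn : n ≠ 0) :
    Real.log n = ∑ p ∈ n.primeFactors, Real.log ((p : ℝ) ^ n.factorization p) := by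
  conv_lhs => rw [Nat.prod_primeFactors_pow_factorization hn]
  push_cast
  exact Real.log_prod fun p hp =>
    pow_ne_zero _ (Nat.cast_ne_zero.2 (Nat.prime_of_mem_primeFactors hp).ne_zero)

theorem apply_eq_apply_ordProj_mul_apply_ordCompl {R : Type*} [Mul R] {f : ℕ → R}
    (hmul : ∀ m n : ℕ, Nat.Coprime m n → f (m * n) = f m * f n) {n p : ℕ} (hp : p.Prime)
    (hn : n ≠ 0) : f n = f (ordProj[p] n) * f (ordCompl[p] n) := by
  conv_lhs => rw [← Nat.ordProj_mul_ordCompl_eq_self n p]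
  exact hmul _ _ ((Nat.coprime_ordCompl hp hn).pow_left _)

theorem log_weight_identities_general (f : ℕ → ℝ)
    (hmul : ∀ m n : ℕ, Nat.Coprime m n → f (m * n) = f m * f n)
    (x : ℝ) :
    (∑ n ∈ Finset.Icc 1 ⌊x⌋₊, f n * Real.log x
      = (∑ n ∈ Finset.Icc 1 ⌊x⌋₊, f n * Real.log n)
        + ∑ n ∈ Finset.Icc 1 ⌊x⌋₊, f n * Real.log (x / n)) ∧
    (∑ n ∈ Finset.Icc 1 ⌊x⌋₊, f n * Real.log n
      = ∑ m ∈ Finset.Icc 1 ⌊x⌋₊, f m *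
          ∑ p ∈ Finset.Icc 1 ⌊x⌋₊, ∑ ν ∈ Finset.Icc 1 ⌊x⌋₊,
            if p.Prime ∧ ¬ p ∣ m ∧ ((p : ℝ) ^ ν * m ≤ x) then
              f (p ^ ν) * Real.log ((p : ℝ) ^ ν) else 0) := by
  constructor
  · rw [← sum_add_distrib]
    refine sum_congr rfl fun n hn => ?_
    have hn0 : (0 : ℝ) < n := Nat.cast_pos.2 (mem_Icc.1 hn).1
    rw [Real.log_div (hn0.trans_le (Nat.cast_le_of_mem_Icc_one_floor hn)).ne' hn0.ne']
    ring
  calc ∑ n ∈ Icc 1 ⌊x⌋₊, f n * Real.log n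
      = ∑ n ∈ Icc 1 ⌊x⌋₊, ∑ p ∈ n.primeFactors, f (ordCompl[p] n) *
          (f (p ^ n.factorization p) * Real.log ((p : ℝ) ^ n.factorization p)) := by
        refine sum_congr rfl fun n hn => ?_
        have hn0 : n ≠ 0 := Nat.one_le_iff_ne_zero.1 (mem_Icc.1 hn).1
        rw [Real.log_natCast_eq_sum_primeFactors hn0, mul_sum]
        refine sum_congr rfl fun p hp => ?_
        rw [apply_eq_apply_ordProj_mul_apply_ordCompl hmul (Nat.prime_of_mem_primeFactors hp) hn0]
        ring
    _ = ∑ m ∈ Icc 1 ⌊x⌋₊, ∑ p ∈ Icc 1 ⌊x⌋₊, ∑ ν ∈ Icc 1 ⌊x⌋₊,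
          if p.Prime ∧ ¬p ∣ m ∧ p ^ ν * m ≤ ⌊x⌋₊ then
            f m * (f (p ^ ν) * Real.log ((p : ℝ) ^ ν)) else 0 :=
        Nat.sum_Icc_sum_primeFactors_eq_sum_pow_mul _ fun m p ν =>
          f m * (f (p ^ ν) * Real.log ((p : ℝ) ^ ν))
    _ = _ := by
        refine sum_congr rfl fun m hm => ?_
        have hm0 : m ≠ 0 := Nat.one_le_iff_ne_zero.1 (mem_Icc.1 hm).1
        have hbound : ∀ p ν : ℕ, (p.Prime ∧ ¬p ∣ m ∧ p ^ ν * m ≤ ⌊x⌋₊) ↔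
            (p.Prime ∧ ¬p ∣ m ∧ (p : ℝ) ^ ν * m ≤ x) := fun p ν =>
          and_congr_right fun hp => and_congr_right fun _ => by
            rw [Nat.le_floor_iff' (mul_ne_zero (pow_ne_zero ν hp.ne_zero) hm0)]
            push_cast
            rfl
        simp only [hbound, mul_sum, mul_ite, mul_zero]

theorem log_weight_identities (f : ℕ → ℝ) (hf1 : f 1 = 1)
    (hmul : ∀ m n : ℕ, Nat.Coprime m n → f (m * n) = f m * f n)
    (hnonneg : ∀ n, 0 ≤ f n) (x : ℝ) (hx : 2 ≤ x) :
    (∑ n ∈ Finset.Icc 1 ⌊x⌋₊, f n * Real.log x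
      = (∑ n ∈ Finset.Icc 1 ⌊x⌋₊, f n * Real.log n)
        + ∑ n ∈ Finset.Icc 1 ⌊x⌋₊, f n * Real.log (x / n)) ∧
    (∑ n ∈ Finset.Icc 1 ⌊x⌋₊, f n * Real.log n
      = ∑ m ∈ Finset.Icc 1 ⌊x⌋₊, f m *
          ∑ p ∈ Finset.Icc 1 ⌊x⌋₊, ∑ ν ∈ Finset.Icc 1 ⌊x⌋₊,
            if p.Prime ∧ ¬ p ∣ m ∧ ((p : ℝ) ^ ν * m ≤ x) then
              f (p ^ ν) * Real.log ((p : ℝ) ^ ν) else 0) :=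
  log_weight_identities_general f hmul x
end
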